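/- arXiv:1402.4336 — 7 statements merged into one kernel-verified Lean document; each statement's English description precedes it below -/
import Mathlib

section
/- Let η : ∂U → ℝⁿ satisfy ‖η(x)‖ = r for all x and Lip(η) ≤ 1. Then for every t ∈ (−1/2, 1/2) and all x, y ∈ ∂U, one has ‖(x + t·η(x)) − (y + t·η(y))‖ ≥ √(1 − 2|t|)·‖x − y‖. -/
/-! For `|t| < 1` the reverse triangle inequality gives
`‖a + t • b‖ ≥ ‖a‖ - |t| ‖b‖ ≥ (1 - |t|) ‖a‖` whenever `‖b‖ ≤ ‖a‖`, and `(1 - |t|)² ≥ 1 - 2|t|`.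
Applied to `a = x - y`, `b = η x - η y`, this is the claim. -/

theorem Real.sqrt_one_sub_two_mul_le_one_sub {s : ℝ} (hs : s ≤ 1) : √(1 - 2 * s) ≤ 1 - s :=
  Real.sqrt_le_iff.mpr ⟨by linarith, by nlinarith [sq_nonneg s]⟩

theorem sqrt_one_sub_two_abs_mul_norm_le_norm_add_smul {E : Type*} [SeminormedAddCommGroup E]
    [NormedSpace ℝ E] {a b : E} (hba : ‖b‖ ≤ ‖a‖) (t : ℝ) :
    √(1 - 2 * |t|) * ‖a‖ ≤ ‖a + t • b‖ := by
  rcases le_or_gt 1 |t| with ht | ht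
  · rw [Real.sqrt_eq_zero_of_nonpos (by linarith), zero_mul]
    exact norm_nonneg _
  calc √(1 - 2 * |t|) * ‖a‖ ≤ (1 - |t|) * ‖a‖ := by
        gcongr; exact Real.sqrt_one_sub_two_mul_le_one_sub ht.le
    _ ≤ ‖a‖ - |t| * ‖b‖ := by nlinarith [abs_nonneg t]
    _ = ‖a‖ - ‖t • b‖ := by rw [norm_smul, Real.norm_eq_abs]
    _ ≤ ‖a + t • b‖ := norm_sub_le_norm_add a (t • b)

theorem stmt1_general (n : ℕ) (U : Set (EuclideanSpace ℝ (Fin n)))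
    (η : EuclideanSpace ℝ (Fin n) → EuclideanSpace ℝ (Fin n))
    (hlip : ∀ x ∈ frontier U, ∀ y ∈ frontier U, ‖η x - η y‖ ≤ ‖x - y‖) :
    ∀ t ∈ Set.Ioo (-(1/2) : ℝ) (1/2), ∀ x ∈ frontier U, ∀ y ∈ frontier U,
      Real.sqrt (1 - 2 * |t|) * ‖x - y‖ ≤ ‖(x + t • η x) - (y + t • η y)‖ := by
  intro t _ x hx y hy
  have hdiff : (x + t • η x) - (y + t • η y) = (x - y) + t • (η x - η y) := by
    rw [smul_sub]; abel
  rw [hdiff]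
  exact sqrt_one_sub_two_abs_mul_norm_le_norm_add_smul (hlip x hx y hy) t

theorem stmt1 (n : ℕ) (U : Set (EuclideanSpace ℝ (Fin n))) (hU : IsOpen U)
    (r : ℝ) (hr : 0 < r) (η : EuclideanSpace ℝ (Fin n) → EuclideanSpace ℝ (Fin n))
    (hnorm : ∀ x ∈ frontier U, ‖η x‖ = r)
    (hlip : ∀ x ∈ frontier U, ∀ y ∈ frontier U, ‖η x - η y‖ ≤ ‖x - y‖) :
    ∀ t ∈ Set.Ioo (-(1/2) : ℝ) (1/2), ∀ x ∈ frontier U, ∀ y ∈ frontier U,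
      Real.sqrt (1 - 2 * |t|) * ‖x - y‖ ≤ ‖(x + t • η x) - (y + t • η y)‖ :=
  stmt1_general n U η hlip
end

section
/- Let γ : [0, ∞) → ℝⁿ be a C¹ curve with ‖γ(0)‖ = r, ⟨γ(0), γ′(0)⟩ = 0, ‖γ′(t)‖ = 1 for all t ≥ 0, and γ′ Lipschitz with constant 1/r. Then ‖γ(t)‖ ≥ r for every t ∈ [0, π·r]. -/
/-!
Put `m = ⟪γ, γ'⟫` and `d = ‖γ‖² - r²`, so that `d' = 2 m`, and let
`F = d' sin (t / r) - d cos (t / r) / r` be the Wronskian of `sin (t / r)` and `d`. The function `m`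
is only Lipschitz, but the curvature bound still gives `m' ≥ 1 - ‖γ‖ / r` for lower right Dini
derivatives, hence `F' ≥ sin (t / r) (2 m' + d / r²) ≥ sin (t / r) (1 - ‖γ‖ / r)² ≥ 0` on
`[0, π r]`. Since `F 0 = 0`, `F ≥ 0` there, so `d / sin (t / r)` is nondecreasing on `(0, π r)`;
its limit at `0⁺` is `r d'(0) = 0`, whence `d ≥ 0`. At `t = π r` the inequality `F ≥ 0` reads
`d / r ≥ 0`.
-/

open Real Set Filter Topology
open scoped NNReal RealInnerProductSpace

theorem HasDerivAt.tendsto_slope_nhdsGT {F : Type*} [NormedAddCommGroup F] [NormedSpace ℝ F]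
    {f : ℝ → F} {f' : F} {x : ℝ} (hf : HasDerivAt f f' x) :
    Tendsto (slope f x) (𝓝[>] x) (𝓝 f') :=
  (hasDerivAt_iff_tendsto_slope.mp hf).mono_left (nhdsGT_le_nhdsNE x)

theorem LipschitzOnWith.norm_slope_le {F : Type*} [NormedAddCommGroup F] [NormedSpace ℝ F]
    {f : ℝ → F} {K : ℝ≥0} {s : Set ℝ} (hf : LipschitzOnWith K f s) {x y : ℝ}
    (hx : x ∈ s) (hy : y ∈ s) : ‖slope f x y‖ ≤ K := by
  rcases eq_or_ne x y with rfl | hne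
  · simp
  rw [slope_def_module, norm_smul, norm_inv, ← dist_eq_norm, ← dist_eq_norm, dist_comm y,
    dist_comm (f y), inv_mul_le_iff₀ (dist_pos.mpr hne)]
  exact (hf.dist_le_mul x hx y hy).trans_eq (mul_comm _ _)

theorem monotoneOn_of_eventually_neg_lt_slope_right {f : ℝ → ℝ} {a b : ℝ}
    (hf : ContinuousOn f (Icc a b))
    (hslope : ∀ x ∈ Ico a b, ∀ ε > 0, ∀ᶠ z in 𝓝[>] x, -ε < slope f x z) :
    MonotoneOn f (Icc a b) := by
  intro x hx y hy hxy
  have key := image_le_of_liminf_slope_right_le_deriv_boundary (f := fun t => -f t)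
    (a := x) (b := y) (B := fun _ => -f x) (B' := 0) (hf.mono (Icc_subset_Icc hx.1 hy.2)).neg le_rfl
    continuousOn_const (fun _ _ => hasDerivWithinAt_const _ _ _)
    (fun t ht ε hε => by
      refine (hslope t ⟨hx.1.trans ht.1, ht.2.trans_le hy.2⟩ ε hε).frequently.mono fun z hz => ?_
      rw [slope_neg]
      exact neg_lt.mp hz)
    ⟨hxy, le_rfl⟩
  exact neg_le_neg_iff.mp key

theorem nonneg_of_wronskian_nonneg {g h g' h' : ℝ → ℝ} {a b : ℝ}
    (hg : ∀ t ∈ Ico a b, HasDerivAt g (g' t) t) (hh : ∀ t ∈ Ico a b, HasDerivAt h (h' t) t)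
    (hga : g a = 0) (hha : h a = 0) (hg'a : 0 ≤ g' a) (hh'a : 0 < h' a)
    (hpos : ∀ t ∈ Ioo a b, 0 < h t) (hW : ∀ t ∈ Ioo a b, 0 ≤ g' t * h t - g t * h' t) :
    ∀ t ∈ Ioo a b, 0 ≤ g t := by
  have hmono : MonotoneOn (fun t => g t / h t) (Ioo a b) := by
    have hderiv : ∀ t ∈ Ioo a b, HasDerivAt (fun t => g t / h t)
        ((g' t * h t - g t * h' t) / h t ^ 2) t := fun t ht =>
      (hg t (Ioo_subset_Ico_self ht)).div (hh t (Ioo_subset_Ico_self ht)) (hpos t ht).ne'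
    refine monotoneOn_of_hasDerivWithinAt_nonneg (convex_Ioo a b)
      (fun t ht => (hderiv t ht).continuousAt.continuousWithinAt)
      (fun t ht => (hderiv t (interior_subset ht)).hasDerivWithinAt) fun t ht => ?_
    rw [interior_Ioo] at ht
    exact div_nonneg (hW t ht) (sq_nonneg _)
  intro t ht
  have hab : a < b := ht.1.trans ht.2
  have hlim : Tendsto (fun t => g t / h t) (𝓝[>] a) (𝓝 (g' a / h' a)) := by
    refine ((hg a ⟨le_rfl, hab⟩).tendsto_slope_nhdsGT.div
      (hh a ⟨le_rfl, hab⟩).tendsto_slope_nhdsGT hh'a.ne').congr' ?_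
    filter_upwards [self_mem_nhdsWithin] with s hs
    simp only [Pi.div_apply, slope_def_field, hga, hha, sub_zero]
    exact div_div_div_cancel_right₀ (sub_ne_zero.mpr (ne_of_gt hs)) _ _
  have hq : g' a / h' a ≤ g t / h t := by
    refine le_of_tendsto hlim ?_
    filter_upwards [Ioo_mem_nhdsGT ht.1] with s hs
    exact hmono ⟨hs.1, hs.2.trans ht.2⟩ ht hs.2.le
  have := mul_nonneg ((div_nonneg hg'a hh'a.le).trans hq) (hpos t ht).le
  rwa [div_mul_cancel₀ _ (hpos t ht).ne'] at this

theorem hasDerivAt_sin_div (r x : ℝ) :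
    HasDerivAt (fun t => sin (t / r)) (cos (x / r) / r) x := by
  simpa [div_eq_mul_inv] using ((hasDerivAt_id x).div_const r).sin

theorem hasDerivAt_cos_div (r x : ℝ) :
    HasDerivAt (fun t => cos (t / r)) (-sin (x / r) / r) x := by
  simpa [div_eq_mul_inv, neg_mul] using ((hasDerivAt_id x).div_const r).cos

section Curve

variable {E : Type*} [NormedAddCommGroup E] [InnerProductSpace ℝ E]

theorem slope_inner (f g : ℝ → E) (x z : ℝ) :
    slope (fun t => ⟪f t, g t⟫) x z = ⟪slope f x z, g z⟫ + ⟪f x, slope g x z⟫ := by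
  simp only [slope_def_module, real_inner_smul_left, real_inner_smul_right, inner_sub_left,
    inner_sub_right, smul_eq_mul]
  ring

theorem inner_slope_sub_le_slope_inner {γ γ' : ℝ → E} {K : ℝ≥0} {s : Set ℝ}
    (hlip : LipschitzOnWith K γ' s) {x z : ℝ} (hx : x ∈ s) (hz : z ∈ s) :
    ⟪slope γ x z, γ' z⟫ - ‖γ x‖ * K ≤ slope (fun t => ⟪γ t, γ' t⟫) x z := by
  have h := (abs_real_inner_le_norm (γ x) (slope γ' x z)).trans
    (mul_le_mul_of_nonneg_left (hlip.norm_slope_le hx hz) (norm_nonneg _))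
  rw [slope_inner]
  linarith [neg_abs_le ⟪γ x, slope γ' x z⟫]

noncomputable def sinWronskian (γ γ' : ℝ → E) (r t : ℝ) : ℝ :=
  2 * ⟪γ t, γ' t⟫ * sin (t / r) - (‖γ t‖ ^ 2 - r ^ 2) * (cos (t / r) / r)

theorem slope_sinWronskian (γ γ' : ℝ → E) (r : ℝ) {x z : ℝ} (hxz : x ≠ z) :
    slope (sinWronskian γ γ' r) x z
      = 2 * sin (z / r) * slope (fun t => ⟪γ t, γ' t⟫) x z
        + 2 * ⟪γ x, γ' x⟫ * slope (fun t => sin (t / r)) x z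
        - (slope (fun t => ‖γ t‖ ^ 2 - r ^ 2) x z * cos (z / r)
          + (‖γ x‖ ^ 2 - r ^ 2) * slope (fun t => cos (t / r)) x z) / r := by
  have : z - x ≠ 0 := sub_ne_zero.mpr hxz.symm
  simp only [slope_def_field, sinWronskian]
  field_simp
  ring

theorem continuousOn_sinWronskian {γ γ' : ℝ → E} {r : ℝ}
    (hderiv : ∀ t ∈ Ici (0:ℝ), HasDerivAt γ (γ' t) t)
    (hlip : LipschitzOnWith (1/r).toNNReal γ' (Ici 0)) :
    ContinuousOn (sinWronskian γ γ' r) (Ici 0) := by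
  have hγ : ContinuousOn γ (Ici 0) := fun t ht => (hderiv t ht).continuousAt.continuousWithinAt
  have hγ' := hlip.continuousOn
  unfold sinWronskian
  fun_prop

theorem eventually_neg_lt_slope_sinWronskian {γ γ' : ℝ → E} {r : ℝ} (hr : 0 < r)
    (hderiv : ∀ t ∈ Ici (0:ℝ), HasDerivAt γ (γ' t) t) (hspeed : ∀ t ∈ Ici (0:ℝ), ‖γ' t‖ = 1)
    (hlip : LipschitzOnWith (1/r).toNNReal γ' (Ici 0)) {x : ℝ} (hx : x ∈ Ico 0 (π * r))
    {ε : ℝ} (hε : 0 < ε) :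
    ∀ᶠ z in 𝓝[>] x, -ε < slope (sinWronskian γ γ' r) x z := by
  have hS := hasDerivAt_sin_div r x
  have hC := hasDerivAt_cos_div r x
  set m := fun t => ⟪γ t, γ' t⟫
  set d := fun t => ‖γ t‖ ^ 2 - r ^ 2
  set S := fun t => sin (t / r)
  set C := fun t => cos (t / r)
  have hd : HasDerivAt d (2 * m x) x := ((hderiv x hx.1).norm_sq).sub_const _
  have hγ' : Tendsto γ' (𝓝[>] x) (𝓝 (γ' x)) :=
    (hlip.continuousOn x hx.1).mono_left (nhdsWithin_mono x (Ioi_subset_Ici hx.1))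
  set G := fun z => 2 * S z * (⟪slope γ x z, γ' z⟫ - ‖γ x‖ / r) + 2 * m x * slope S x z
    - (slope d x z * C z + d x * slope C x z) / r
  have hG : Tendsto G (𝓝[>] x) (𝓝 (S x * (1 - ‖γ x‖ / r) ^ 2)) := by
    have hS' := hS.continuousAt.tendsto.mono_left (nhdsWithin_le_nhds (a := x) (s := Ioi x))
    have hC' := hC.continuousAt.tendsto.mono_left (nhdsWithin_le_nhds (a := x) (s := Ioi x))
    convert (((tendsto_const_nhds.mul hS').mul
      (((hderiv x hx.1).tendsto_slope_nhdsGT.inner hγ').sub tendsto_const_nhds)).add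
        (tendsto_const_nhds.mul hS.tendsto_slope_nhdsGT)).sub
      (((hd.tendsto_slope_nhdsGT.mul hC').add
        (tendsto_const_nhds.mul hC.tendsto_slope_nhdsGT)).div_const r) using 2
    simp only [d, real_inner_self_eq_norm_sq, hspeed x hx.1]
    field_simp
    ring
  have hlim : 0 ≤ S x * (1 - ‖γ x‖ / r) ^ 2 :=
    mul_nonneg (sin_nonneg_of_nonneg_of_le_pi (div_nonneg hx.1 hr.le)
      ((div_le_iff₀ hr).mpr hx.2.le)) (sq_nonneg _)
  have hbound : ∀ z ∈ Ioo x (π * r), G z ≤ slope (sinWronskian γ γ' r) x z := by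
    intro z hz
    have hSz : 0 ≤ S z := sin_nonneg_of_nonneg_of_le_pi (div_nonneg (hx.1.trans hz.1.le) hr.le)
      ((div_le_iff₀ hr).mpr hz.2.le)
    have hm := inner_slope_sub_le_slope_inner (γ := γ) hlip (mem_Ici.mpr hx.1)
      (mem_Ici.mpr (hx.1.trans hz.1.le))
    rw [Real.coe_toNNReal _ (by positivity), mul_one_div] at hm
    rw [slope_sinWronskian γ γ' r hz.1.ne]
    have := mul_le_mul_of_nonneg_left hm (by positivity : (0:ℝ) ≤ 2 * S z)
    simp only [G]
    linarith
  filter_upwards [hG.eventually (lt_mem_nhds (by linarith : -ε < _)), Ioo_mem_nhdsGT hx.2]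
    with z hz hz'
  exact hz.trans_le (hbound z hz')

theorem sinWronskian_nonneg {γ γ' : ℝ → E} {r : ℝ} (hr : 0 < r)
    (hderiv : ∀ t ∈ Ici (0:ℝ), HasDerivAt γ (γ' t) t) (h0 : ‖γ 0‖ = r)
    (hspeed : ∀ t ∈ Ici (0:ℝ), ‖γ' t‖ = 1) (hlip : LipschitzOnWith (1/r).toNNReal γ' (Ici 0)) :
    ∀ t ∈ Icc 0 (π * r), 0 ≤ sinWronskian γ γ' r t := by
  have hF0 : sinWronskian γ γ' r 0 = 0 := by simp [sinWronskian, h0]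
  intro t ht
  rw [← hF0]
  exact monotoneOn_of_eventually_neg_lt_slope_right
    ((continuousOn_sinWronskian hderiv hlip).mono Icc_subset_Ici_self)
    (fun x hx _ hε => eventually_neg_lt_slope_sinWronskian hr hderiv hspeed hlip hx hε)
    ⟨le_rfl, by positivity⟩ ht ht.1

theorem sq_le_norm_sq_pi_mul_of_sinWronskian_nonneg {γ γ' : ℝ → E} {r : ℝ} (hr : 0 < r)
    (hF : 0 ≤ sinWronskian γ γ' r (π * r)) : r ^ 2 ≤ ‖γ (π * r)‖ ^ 2 := by
  simp only [sinWronskian, mul_div_cancel_right₀ π hr.ne', sin_pi, cos_pi, mul_zero, zero_sub,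
    neg_div, mul_neg, neg_neg] at hF
  exact sub_nonneg.mp (nonneg_of_mul_nonneg_left hF (one_div_pos.mpr hr))

theorem sq_le_norm_sq_of_sinWronskian_nonneg {γ γ' : ℝ → E} {r : ℝ} (hr : 0 < r)
    (hderiv : ∀ t ∈ Ici (0:ℝ), HasDerivAt γ (γ' t) t) (h0 : ‖γ 0‖ = r) (horth : 0 ≤ ⟪γ 0, γ' 0⟫)
    (hF : ∀ t ∈ Ioo 0 (π * r), 0 ≤ sinWronskian γ γ' r t) :
    ∀ t ∈ Ioo 0 (π * r), r ^ 2 ≤ ‖γ t‖ ^ 2 := fun t ht =>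
  sub_nonneg.mp <| nonneg_of_wronskian_nonneg (g := fun t => ‖γ t‖ ^ 2 - r ^ 2)
    (g' := fun t => 2 * ⟪γ t, γ' t⟫) (fun s hs => ((hderiv s hs.1).norm_sq).sub_const _)
    (fun s _ => hasDerivAt_sin_div r s) (by simp [h0]) (by simp) (by simpa using horth)
    (by simp [hr])
    (fun s hs => sin_pos_of_pos_of_lt_pi (div_pos hs.1 hr) ((div_lt_iff₀ hr).mpr hs.2)) hF t ht

end Curve

theorem stmt3 (n : ℕ) (r : ℝ) (hr : 0 < r)
    (γ γ' : ℝ → EuclideanSpace ℝ (Fin n))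
    (hderiv : ∀ t ∈ Set.Ici (0:ℝ), HasDerivAt γ (γ' t) t)
    (h0 : ‖γ 0‖ = r)
    (horth : (inner ℝ (γ 0) (γ' 0) : ℝ) = 0)
    (hspeed : ∀ t ∈ Set.Ici (0:ℝ), ‖γ' t‖ = 1)
    (hlip : LipschitzOnWith (Real.toNNReal (1/r)) γ' (Set.Ici 0)) :
    ∀ t ∈ Set.Icc (0:ℝ) (π * r), r ≤ ‖γ t‖ := by
  have hF := sinWronskian_nonneg hr hderiv h0 hspeed hlip
  intro t ⟨ht0, htπ⟩
  suffices r ^ 2 ≤ ‖γ t‖ ^ 2 from (pow_le_pow_iff_left₀ hr.le (norm_nonneg _) two_ne_zero).mp this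
  rcases ht0.eq_or_lt with rfl | ht0
  · rw [h0]
  rcases htπ.eq_or_lt with rfl | htπ
  · exact sq_le_norm_sq_pi_mul_of_sinWronskian_nonneg hr (hF _ ⟨ht0.le, le_rfl⟩)
  · exact sq_le_norm_sq_of_sinWronskian_nonneg hr hderiv h0 horth.ge
      (fun s hs => hF s (Ioo_subset_Icc_self hs)) t ⟨ht0, htπ⟩
end

section
/- Six Ball Lemma: Let (B₁,B₁′), (B₂,B₂′), (B₃,B₃′) be three pairs of open Euclidean balls of radius r in ℝⁿ such that Bᵢ and Bᵢ′ are tangent at xᵢ for i = 1,2,3, the unions B₁∪B₂∪B₃ and B₁′∪B₂′∪B₃′ are disjoint, 0 < ‖x₁ − x₂‖ < 2r, ‖x₃ − x₁‖ = ‖x₃ − x₂‖, ‖x₃ − (x₁+x₂)/2‖ ≤ (1/2)‖x₁ − x₂‖, and the line through the centres of B₃ and B₃′ lies in the affine plane determined by x₁, x₂, x₃. Then ‖x₃ − (x₁+x₂)/2‖ ≤ r − √(r² − ‖x₁ − x₂‖²/4). -/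
open Metric
open scoped InnerProductSpace

private lemma key_half (r s d α γ : ℝ) (hs : 0 < s)
    (hα : 0 ≤ α) (hγ : 0 ≤ γ) (hcirc : α^2 + γ^2 = r^2) (hr : 0 < r)
    (h1 : s^2/4 + d^2 < s*r) (h2 : s^2/4 + d^2 < 2*d*r) :
    s^2/4 + d^2 < s*α + 2*d*γ := by
  have hsum : r ≤ α + γ := by nlinarith [mul_nonneg hα hγ]
  rcases le_total s (2*d) with hle | hle
  · have e1 : s*r ≤ s*(α + γ) := mul_le_mul_of_nonneg_left hsum hs.le
    have e2 : 0 ≤ (2*d - s)*γ := mul_nonneg (by linarith) hγ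
    nlinarith [e1, e2]
  · have e1 : (2*d)*r ≤ (2*d)*(α + γ) := by
      apply mul_le_mul_of_nonneg_left hsum
      nlinarith
    have e2 : 0 ≤ (s - 2*d)*α := mul_nonneg (by linarith) hα
    nlinarith [e1, e2]

private lemma key_real (r s d a b : ℝ) (hr : 0 < r) (hs : 0 < s) (hd : 0 < d)
    (hds : d ≤ s / 2) (hs2r : s < 2 * r)
    (hab : a^2 * s^2 + b^2 * d^2 = r^2) (hb : b ≤ 0)
    (hcon : r - Real.sqrt (r^2 - s^2/4) < d) :
    (a - 1/2)^2 * s^2 + (b + 1)^2 * d^2 < r^2 ∨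
      (a + 1/2)^2 * s^2 + (b + 1)^2 * d^2 < r^2 := by
  have hdr : d < r := by linarith
  have h1 : s^2/4 + d^2 < s*r := by nlinarith
  have hnn : (0:ℝ) ≤ r^2 - s^2/4 := by nlinarith
  have hsq := Real.sq_sqrt hnn
  have hsqnn := Real.sqrt_nonneg (r^2 - s^2/4)
  have h2 : s^2/4 + d^2 < 2*d*r := by
    have hpos1 : 0 < Real.sqrt (r^2 - s^2/4) - (r - d) := by linarith
    have hpos2 : 0 < Real.sqrt (r^2 - s^2/4) + (r - d) := by linarith
    nlinarith [mul_pos hpos1 hpos2]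
  have hγ : 0 ≤ -b*d := mul_nonneg (by linarith) hd.le
  rcases le_total 0 a with ha | ha
  · left
    have hα : 0 ≤ a*s := mul_nonneg ha hs.le
    have hk := key_half r s d (a*s) (-b*d) hs hα hγ (by linear_combination hab) hr h1 h2
    nlinarith [hk, hab]
  · right
    have hα : 0 ≤ -a*s := mul_nonneg (by linarith) hs.le
    have hk := key_half r s d (-a*s) (-b*d) hs hα hγ (by linear_combination hab) hr h1 h2
    nlinarith [hk, hab]

private lemma ball_contra {V : Type*} [NormedAddCommGroup V] [NormedSpace ℝ V]
    (r : ℝ) (p q x : V) (hdisj : Disjoint (ball p r) (ball q r))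
    (hqx : dist q x = r) (hpx : dist p x < r) : False := by
  have hr : 0 < r := lt_of_le_of_lt dist_nonneg hpx
  have hpq : dist p q < 2*r := by
    have h := dist_triangle p x q
    have : dist x q = r := by rw [dist_comm]; exact hqx
    linarith
  have h1 : midpoint ℝ p q ∈ ball p r := by
    rw [mem_ball, dist_midpoint_left]
    simp only [Real.norm_ofNat]
    linarith
  have h2 : midpoint ℝ p q ∈ ball q r := by
    rw [mem_ball, dist_midpoint_right]
    simp only [Real.norm_ofNat]
    linarith
  exact (Set.disjoint_left.mp hdisj h1) h2

set_option maxHeartbeats 2000000 in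
theorem stmt5 (n : ℕ) (r : ℝ) (hr : 0 < r)
    (c₁ c₂ c₃ c₁' c₂' c₃' x₁ x₂ x₃ : EuclideanSpace ℝ (Fin n))
    (htan₁ : dist c₁ c₁' = 2 * r ∧ dist c₁ x₁ = r ∧ dist c₁' x₁ = r)
    (htan₂ : dist c₂ c₂' = 2 * r ∧ dist c₂ x₂ = r ∧ dist c₂' x₂ = r)
    (htan₃ : dist c₃ c₃' = 2 * r ∧ dist c₃ x₃ = r ∧ dist c₃' x₃ = r)
    (hdisj : Disjoint (ball c₁ r ∪ ball c₂ r ∪ ball c₃ r)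
                      (ball c₁' r ∪ ball c₂' r ∪ ball c₃' r))
    (hpos : 0 < ‖x₁ - x₂‖) (hlt : ‖x₁ - x₂‖ < 2 * r)
    (hiso : ‖x₃ - x₁‖ = ‖x₃ - x₂‖)
    (hmid : ‖x₃ - midpoint ℝ x₁ x₂‖ ≤ (1/2) * ‖x₁ - x₂‖)
    (hplane : (affineSpan ℝ ({c₃, c₃'} : Set (EuclideanSpace ℝ (Fin n))) : Set (EuclideanSpace ℝ (Fin n)))
      ⊆ (affineSpan ℝ ({x₁, x₂, x₃} : Set (EuclideanSpace ℝ (Fin n))) : Set (EuclideanSpace ℝ (Fin n)))) :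
    ‖x₃ - midpoint ℝ x₁ x₂‖ ≤ r - Real.sqrt (r^2 - ‖x₁ - x₂‖^2 / 4) := by
  classical
  set m := midpoint ℝ x₁ x₂ with hm
  have hmeq : m = (2⁻¹:ℝ) • (x₁ + x₂) := by
    rw [hm, midpoint_eq_smul_add, invOf_eq_inv]
  by_cases hd0 : x₃ = m
  · have hz : ‖x₃ - m‖ = 0 := by simp [hd0]
    rw [hz]
    have h1 : Real.sqrt (r^2 - ‖x₁ - x₂‖^2/4) ≤ r := by
      calc Real.sqrt (r^2 - ‖x₁ - x₂‖^2/4) ≤ Real.sqrt (r^2) :=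
            Real.sqrt_le_sqrt (by nlinarith [sq_nonneg ‖x₁ - x₂‖])
        _ = r := Real.sqrt_sq hr.le
    linarith
  by_contra hcon
  push_neg at hcon
  set s := ‖x₁ - x₂‖ with hsdef
  set d := ‖x₃ - m‖ with hddef
  have hd : 0 < d := norm_pos_iff.mpr (sub_ne_zero.mpr hd0)
  have hds : d ≤ s / 2 := by linarith
  have hAn : ‖x₂ - x₁‖ = s := by rw [hsdef, norm_sub_rev]
  -- orthogonality
  have e1 : x₃ - x₁ = (x₃ - m) + (2⁻¹:ℝ) • (x₂ - x₁) := by rw [hmeq]; module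
  have e2 : x₃ - x₂ = (x₃ - m) - (2⁻¹:ℝ) • (x₂ - x₁) := by rw [hmeq]; module
  have horth : ⟪x₂ - x₁, x₃ - m⟫_ℝ = 0 := by
    have h0 : ‖(x₃ - m) + (2⁻¹:ℝ) • (x₂ - x₁)‖^2
        = ‖(x₃ - m) - (2⁻¹:ℝ) • (x₂ - x₁)‖^2 := by
      rw [← e1, ← e2, hiso]
    have ha := norm_add_sq_real (x₃ - m) ((2⁻¹:ℝ) • (x₂ - x₁))
    have hb := norm_sub_sq_real (x₃ - m) ((2⁻¹:ℝ) • (x₂ - x₁))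
    rw [real_inner_smul_right] at ha hb
    have : ⟪x₃ - m, x₂ - x₁⟫_ℝ = 0 := by linarith
    rw [real_inner_comm]; exact this
  -- x₃ is the midpoint of c₃ c₃'
  have hn1 : ‖c₃ - x₃‖ = r := by rw [← dist_eq_norm]; exact htan₃.2.1
  have hn2 : ‖x₃ - c₃'‖ = r := by rw [← dist_eq_norm, dist_comm]; exact htan₃.2.2
  have hn3 : ‖(c₃ - x₃) + (x₃ - c₃')‖ = 2*r := by
    have h : c₃ - x₃ + (x₃ - c₃') = c₃ - c₃' := by abel
    rw [h, ← dist_eq_norm]; exact htan₃.1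
  have hu : c₃ - x₃ = x₃ - c₃' := by
    have ea := norm_add_sq_real (c₃ - x₃) (x₃ - c₃')
    have eb := norm_sub_sq_real (c₃ - x₃) (x₃ - c₃')
    rw [hn1, hn2] at ea eb
    rw [hn3] at ea
    have hz : ‖(c₃ - x₃) - (x₃ - c₃')‖^2 = 0 := by nlinarith
    have hz2 : ‖(c₃ - x₃) - (x₃ - c₃')‖ = 0 := by
      exact sq_eq_zero_iff.mp hz
    exact sub_eq_zero.mp (norm_eq_zero.mp hz2)
  -- c₃ - x₃ lies in span {x₂ - x₁, x₃ - m}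
  have hmem : c₃ - x₃ ∈ Submodule.span ℝ ({x₂ - x₁, x₃ - m} : Set (EuclideanSpace ℝ (Fin n))) := by
    set F := Submodule.span ℝ ({x₂ - x₁, x₃ - m} : Set (EuclideanSpace ℝ (Fin n))) with hF
    have hmem1 : x₂ - x₁ ∈ F := Submodule.subset_span (by simp)
    have hmem2 : x₃ - m ∈ F := Submodule.subset_span (by simp)
    set Q : AffineSubspace ℝ (EuclideanSpace ℝ (Fin n)) := AffineSubspace.mk' x₃ F with hQ
    have hq1 : x₁ ∈ Q := by
      rw [hQ, AffineSubspace.mem_mk']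
      have hv : x₁ -ᵥ x₃ = -((x₃ - m) + (2⁻¹:ℝ) • (x₂ - x₁)) := by
        rw [vsub_eq_sub, hmeq]; module
      rw [hv]
      exact Submodule.neg_mem _ (Submodule.add_mem _ hmem2 (Submodule.smul_mem _ _ hmem1))
    have hq2 : x₂ ∈ Q := by
      rw [hQ, AffineSubspace.mem_mk']
      have hv : x₂ -ᵥ x₃ = -((x₃ - m) - (2⁻¹:ℝ) • (x₂ - x₁)) := by
        rw [vsub_eq_sub, hmeq]; module
      rw [hv]
      exact Submodule.neg_mem _ (Submodule.sub_mem _ hmem2 (Submodule.smul_mem _ _ hmem1))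
    have hq3 : x₃ ∈ Q := by rw [hQ]; exact AffineSubspace.self_mem_mk' _ _
    have hsub : ({x₁, x₂, x₃} : Set (EuclideanSpace ℝ (Fin n))) ⊆ ↑Q := by
      rw [Set.insert_subset_iff, Set.insert_subset_iff, Set.singleton_subset_iff]
      exact ⟨hq1, hq2, hq3⟩
    have hle : affineSpan ℝ ({x₁, x₂, x₃} : Set (EuclideanSpace ℝ (Fin n))) ≤ Q :=
      affineSpan_le.mpr hsub
    have hc3 : c₃ ∈ affineSpan ℝ ({x₁, x₂, x₃} : Set (EuclideanSpace ℝ (Fin n))) := by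
      apply hplane
      exact subset_affineSpan ℝ _ (by simp)
    have hmemQ : c₃ ∈ Q := hle hc3
    rw [hQ, AffineSubspace.mem_mk', vsub_eq_sub] at hmemQ
    exact hmemQ
  obtain ⟨a, b, hab⟩ := Submodule.mem_span_pair.mp hmem
  -- norm computation helper
  have hnormsq : ∀ c e : ℝ, ‖c • (x₂ - x₁) + e • (x₃ - m)‖^2 = c^2*s^2 + e^2*d^2 := by
    intro c e
    rw [norm_add_sq_real, real_inner_smul_left, real_inner_smul_right, horth,
      norm_smul, norm_smul, hAn]
    simp only [Real.norm_eq_abs, mul_zero]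
    rw [mul_pow, mul_pow, sq_abs, sq_abs]
    ring
  have hab2 : a^2*s^2 + b^2*d^2 = r^2 := by
    have h := hnormsq a b
    rw [hab, hn1] at h
    linarith
  -- disjointness facts
  have D31 : Disjoint (ball c₃ r) (ball c₁' r) :=
    hdisj.mono Set.subset_union_right (Set.subset_union_left.trans Set.subset_union_left)
  have D32 : Disjoint (ball c₃ r) (ball c₂' r) :=
    hdisj.mono Set.subset_union_right (Set.subset_union_right.trans Set.subset_union_left)
  have D13 : Disjoint (ball c₁ r) (ball c₃' r) :=
    hdisj.mono (Set.subset_union_left.trans Set.subset_union_left) Set.subset_union_right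
  have D23 : Disjoint (ball c₂ r) (ball c₃' r) :=
    hdisj.mono (Set.subset_union_right.trans Set.subset_union_left) Set.subset_union_right
  rcases le_or_gt b 0 with hb | hb
  · -- use c₃
    have hc3e : c₃ = x₃ + (a • (x₂ - x₁) + b • (x₃ - m)) := by rw [hab]; abel
    rcases key_real r s d a b hr hpos hd hds hlt hab2 hb hcon with hk | hk
    · have hx : c₃ - x₂ = (a - 1/2) • (x₂ - x₁) + (b + 1) • (x₃ - m) := by
        rw [hc3e, hmeq]; module
      have hdist : dist c₃ x₂ < r := by
        rw [dist_eq_norm]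
        have h2 := hnormsq (a - 1/2) (b + 1)
        rw [← hx] at h2
        apply lt_of_pow_lt_pow_left₀ 2 hr.le
        rw [h2]; exact hk
      exact ball_contra r c₃ c₂' x₂ D32 htan₂.2.2 hdist
    · have hx : c₃ - x₁ = (a + 1/2) • (x₂ - x₁) + (b + 1) • (x₃ - m) := by
        rw [hc3e, hmeq]; module
      have hdist : dist c₃ x₁ < r := by
        rw [dist_eq_norm]
        have h2 := hnormsq (a + 1/2) (b + 1)
        rw [← hx] at h2
        apply lt_of_pow_lt_pow_left₀ 2 hr.le
        rw [h2]; exact hk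
      exact ball_contra r c₃ c₁' x₁ D31 htan₁.2.2 hdist
  · -- use c₃'
    have hc3e : c₃' = x₃ + ((-a) • (x₂ - x₁) + (-b) • (x₃ - m)) := by
      have h : a • (x₂ - x₁) + b • (x₃ - m) = x₃ - c₃' := by rw [hab, hu]
      have h2 : c₃' = x₃ - (a • (x₂ - x₁) + b • (x₃ - m)) := by rw [h]; abel
      rw [h2]; module
    have hab2' : (-a)^2*s^2 + (-b)^2*d^2 = r^2 := by rw [neg_sq, neg_sq]; exact hab2
    rcases key_real r s d (-a) (-b) hr hpos hd hds hlt hab2' (by linarith) hcon with hk | hk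
    · have hx : c₃' - x₂ = ((-a) - 1/2) • (x₂ - x₁) + ((-b) + 1) • (x₃ - m) := by
        rw [hc3e, hmeq]; module
      have hdist : dist c₃' x₂ < r := by
        rw [dist_eq_norm]
        have h2 := hnormsq ((-a) - 1/2) ((-b) + 1)
        rw [← hx] at h2
        apply lt_of_pow_lt_pow_left₀ 2 hr.le
        rw [h2]; exact hk
      exact ball_contra r c₃' c₂ x₂ D23.symm htan₂.2.1 hdist
    · have hx : c₃' - x₁ = ((-a) + 1/2) • (x₂ - x₁) + ((-b) + 1) • (x₃ - m) := by
        rw [hc3e, hmeq]; module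
      have hdist : dist c₃' x₁ < r := by
        rw [dist_eq_norm]
        have h2 := hnormsq ((-a) + 1/2) ((-b) + 1)
        rw [← hx] at h2
        apply lt_of_pow_lt_pow_left₀ 2 hr.le
        rw [h2]; exact hk
      exact ball_contra r c₃' c₁ x₁ D13.symm htan₁.2.1 hdist
end

section
/- Define ψ : [0, 2r] → ℝ by ψ(s) = √(2r² − 2r·√(r² − s²/4)). Then for every s ∈ [0, 2r], the limit of 2ⁿ·ψⁿ(s) as n → ∞ (where ψⁿ denotes the n-fold iterate of ψ) equals 2r·arctan(s / √(4r² − s²)); for s = 2r the limit is πr. -/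
open Real Filter

private lemma psi_sin (r θ : ℝ) (hr : 0 < r) (h0 : 0 ≤ θ) (h2 : θ ≤ π/2) :
    Real.sqrt (2*r^2 - 2*r*Real.sqrt (r^2 - (2*r*Real.sin θ)^2/4)) = 2*r*Real.sin (θ/2) := by
  have hpi := Real.pi_pos
  have hcos : 0 ≤ Real.cos θ := Real.cos_nonneg_of_mem_Icc ⟨by linarith, h2⟩
  have h1 : r^2 - (2*r*Real.sin θ)^2/4 = (r * Real.cos θ)^2 := by
    have := Real.sin_sq_add_cos_sq θ
    nlinarith [this]
  rw [h1, Real.sqrt_sq (by positivity)]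
  have hsh : 0 ≤ Real.sin (θ/2) :=
    Real.sin_nonneg_of_nonneg_of_le_pi (by linarith) (by linarith)
  have h2' : 2*r^2 - 2*r*(r*Real.cos θ) = (2*r*Real.sin (θ/2))^2 := by
    have := Real.sin_sq_eq_half_sub (θ/2)
    rw [show 2*(θ/2) = θ by ring] at this
    nlinarith [this]
  rw [h2', Real.sqrt_sq (by positivity)]

private lemma psi_iter (r θ : ℝ) (hr : 0 < r) (h0 : 0 ≤ θ) (h2 : θ ≤ π/2) (n : ℕ) :
    (fun u : ℝ => Real.sqrt (2*r^2 - 2*r*Real.sqrt (r^2 - u^2/4)))^[n] (2*r*Real.sin θ)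
      = 2*r*Real.sin (θ/2^n) := by
  induction n with
  | zero => simp
  | succ n ih =>
    rw [Function.iterate_succ_apply', ih]
    have h0' : 0 ≤ θ/2^n := by positivity
    have h2' : θ/2^n ≤ π/2 := by
      have : (1:ℝ) ≤ 2^n := one_le_pow₀ (by norm_num)
      calc θ/2^n ≤ θ := by
            rw [div_le_iff₀ (by positivity)]; nlinarith
        _ ≤ π/2 := h2
    have := psi_sin r (θ/2^n) hr h0' h2'
    simpa [div_div, ← pow_succ] using this

private lemma lim_sin (r θ : ℝ) (h0 : 0 ≤ θ) :
    Tendsto (fun n : ℕ => (2:ℝ)^n * (2*r*Real.sin (θ/2^n))) atTop (nhds (2*r*θ)) := by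
  rcases eq_or_lt_of_le h0 with h | h
  · simp [← h]
  · have hslope : Tendsto (fun t : ℝ => Real.sin t / t) (nhdsWithin 0 {(0:ℝ)}ᶜ) (nhds 1) := by
      have := (Real.hasDerivAt_sin 0)
      rw [hasDerivAt_iff_tendsto_slope] at this
      rw [Real.cos_zero] at this
      apply this.congr'
      filter_upwards [self_mem_nhdsWithin] with t ht
      simp [slope_fun_def, ht, div_eq_inv_mul]
    have htn : Tendsto (fun n : ℕ => θ/2^n) atTop (nhdsWithin 0 {(0:ℝ)}ᶜ) := by
      apply tendsto_nhdsWithin_of_tendsto_nhds_of_eventually_within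
      · have : Tendsto (fun n : ℕ => ((1:ℝ)/2)^n) atTop (nhds 0) :=
          tendsto_pow_atTop_nhds_zero_of_lt_one (by norm_num) (by norm_num)
        have := this.const_mul θ
        simpa [div_pow, div_eq_mul_inv, mul_comm] using this
      · filter_upwards with n
        simp only [Set.mem_compl_iff, Set.mem_singleton_iff]
        positivity
    have hcomp : Tendsto (fun n : ℕ => Real.sin (θ/2^n) / (θ/2^n)) atTop (nhds 1) :=
      hslope.comp htn
    have := (hcomp.const_mul (2*r*θ))
    rw [mul_one] at this
    apply this.congr'
    filter_upwards with n
    have h2n : (0:ℝ) < 2^n := by positivity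
    field_simp

theorem stmt7 (r : ℝ) (hr : 0 < r) :
    ∀ s ∈ Set.Icc (0:ℝ) (2*r),
      (s < 2*r →
        Tendsto (fun n : ℕ =>
            (2:ℝ)^n * (fun u : ℝ => Real.sqrt (2*r^2 - 2*r*Real.sqrt (r^2 - u^2/4)))^[n] s)
          atTop (nhds (2*r*Real.arctan (s / Real.sqrt (4*r^2 - s^2))))) ∧
      (s = 2*r →
        Tendsto (fun n : ℕ =>
            (2:ℝ)^n * (fun u : ℝ => Real.sqrt (2*r^2 - 2*r*Real.sqrt (r^2 - u^2/4)))^[n] s)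
          atTop (nhds (π * r))) := by
  rintro s ⟨hs0, hs2⟩
  set x := s / (2*r) with hx
  have hx0 : 0 ≤ x := by positivity
  have hx1 : x ≤ 1 := by
    rw [hx, div_le_one (by positivity)]; exact hs2
  set θ := Real.arcsin x with hθ
  have hθ0 : 0 ≤ θ := Real.arcsin_nonneg.2 hx0
  have hθ2 : θ ≤ π/2 := Real.arcsin_le_pi_div_two x
  have hsθ : s = 2*r*Real.sin θ := by
    rw [hθ, Real.sin_arcsin (by linarith) hx1, hx]
    field_simp
  have hlim : Tendsto (fun n : ℕ =>
      (2:ℝ)^n * (fun u : ℝ => Real.sqrt (2*r^2 - 2*r*Real.sqrt (r^2 - u^2/4)))^[n] s)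
      atTop (nhds (2*r*θ)) := by
    have := lim_sin r θ hθ0
    apply this.congr
    intro n
    rw [hsθ, psi_iter r θ hr hθ0 hθ2 n]
  constructor
  · intro hslt
    have hxlt : x < 1 := by
      rw [hx, div_lt_one (by positivity)]; exact hslt
    have hθlt : θ < π/2 := Real.arcsin_lt_pi_div_two.2 hxlt
    have hcos : Real.cos θ = Real.sqrt (1 - x^2) := Real.cos_arcsin x
    have hcospos : 0 < Real.cos θ :=
      Real.cos_pos_of_mem_Ioo ⟨by linarith [Real.pi_pos], hθlt⟩
    have hkey : Real.arctan (s / Real.sqrt (4*r^2 - s^2)) = θ := by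
      have hsq : Real.sqrt (4*r^2 - s^2) = 2*r*Real.cos θ := by
        rw [hcos]
        rw [show (4*r^2 - s^2) = (2*r)^2 * (1 - x^2) by rw [hx]; field_simp; ring]
        rw [Real.sqrt_mul (by positivity), Real.sqrt_sq (by positivity)]
      rw [hsq, hsθ, mul_div_mul_left _ _ (by positivity : (2*r) ≠ 0),
        ← Real.tan_eq_sin_div_cos]
      exact Real.arctan_tan (by linarith [Real.pi_pos]) hθlt
    rw [hkey]; exact hlim
  · intro hse
    have : x = 1 := by rw [hx, hse]; field_simp
    have : θ = π/2 := by rw [hθ, this, Real.arcsin_one]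
    rw [this] at hlim
    have : 2*r*(π/2) = π*r := by ring
    rwa [this] at hlim
end

section
/- Let γ : [a,b] → ℝⁿ be C¹ with Lipschitz derivative and η : ℝⁿ → ℝⁿ a Lipschitz map with Lip(η) ≤ 1 and ‖η(γ(t))‖ = r for all t, such that ⟨γ′(t), η(γ(t))⟩ = 0 for all t, ‖γ′(t)‖ = 1 for all t, and γ′′(t) is collinear with η(γ(t)) for almost every t. Then ‖γ′′(t)‖ ≤ 1/r for almost every t, and hence Lip(γ′) ≤ 1/r. -/
/-!
Pairing with `η (γ t)` and using `⟪γ', η ∘ γ⟫ = 0` at both ends, each difference quotient of `γ'`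
becomes a difference quotient of `η ∘ γ` paired with `γ'`. As `γ` has unit speed, `η ∘ γ` is
`1`-Lipschitz, so `|⟪γ'', η ∘ γ⟫| ≤ 1`, and collinearity turns this into `‖γ''‖ ≤ 1 / r`.
The Lipschitz bound on `γ'` follows from the fundamental theorem of calculus for absolutely
continuous functions, applied to `φ ∘ γ'` for a norming functional `φ`.
-/

open MeasureTheory Filter Topology Set

theorem LipschitzOnWith.sub_le_mul_of_ae_hasDerivAt_le {f f' : ℝ → ℝ} {C : NNReal} {x y K : ℝ}
    (hxy : x ≤ y) (hf : LipschitzOnWith C f (Icc x y))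
    (hderiv : ∀ᵐ t ∂volume.restrict (Icc x y), HasDerivAt f (f' t) t)
    (hbound : ∀ᵐ t ∂volume.restrict (Icc x y), f' t ≤ K) :
    f y - f x ≤ K * (y - x) := by
  have hac := (uIcc_of_le hxy ▸ hf).absolutelyContinuousOnInterval
  have hderiv_le : deriv f ≤ᵐ[volume.restrict (Icc x y)] fun _ ↦ K := by
    filter_upwards [hderiv, hbound] with t ht hK
    rw [ht.deriv]
    exact hK
  calc f y - f x = ∫ t in x..y, deriv f t := hac.integral_deriv_eq_sub.symm
    _ ≤ ∫ _ in x..y, K :=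
      intervalIntegral.integral_mono_ae_restrict hxy hac.intervalIntegrable_deriv
        intervalIntegrable_const hderiv_le
    _ = K * (y - x) := by simp [mul_comm]

theorem LipschitzOnWith.of_ae_hasDerivAt_norm_le {E : Type*} [NormedAddCommGroup E]
    [NormedSpace ℝ E] {f f' : ℝ → E} {C : NNReal} {a b K : ℝ}
    (hf : LipschitzOnWith C f (Icc a b))
    (hderiv : ∀ᵐ t ∂volume.restrict (Icc a b), HasDerivAt f (f' t) t)
    (hbound : ∀ᵐ t ∂volume.restrict (Icc a b), ‖f' t‖ ≤ K) :
    LipschitzOnWith K.toNNReal f (Icc a b) := by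
  have hle : ∀ x ∈ Icc a b, ∀ y ∈ Icc a b, x ≤ y → ‖f y - f x‖ ≤ K * (y - x) := by
    intro x hx y hy hxy
    have hsub : Icc x y ⊆ Icc a b := Icc_subset_Icc hx.1 hy.2
    obtain ⟨g, hg, hgv⟩ := exists_dual_vector'' ℝ (f y - f x)
    have hgf : LipschitzOnWith (‖g‖₊ * C) (g ∘ f) (Icc x y) :=
      g.lipschitz.comp_lipschitzOnWith (hf.mono hsub)
    have hgderiv : ∀ᵐ t ∂volume.restrict (Icc x y), HasDerivAt (g ∘ f) (g (f' t)) t := by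
      filter_upwards [ae_restrict_of_ae_restrict_of_subset hsub hderiv] with t ht
      exact g.hasFDerivAt.comp_hasDerivAt t ht
    have hgbound : ∀ᵐ t ∂volume.restrict (Icc x y), g (f' t) ≤ K := by
      filter_upwards [ae_restrict_of_ae_restrict_of_subset hsub hbound] with t ht
      calc g (f' t) ≤ ‖g‖ * ‖f' t‖ := (le_abs_self _).trans (g.le_opNorm _)
        _ ≤ 1 * K := by gcongr
        _ = K := one_mul K
    calc ‖f y - f x‖ = (g ∘ f) y - (g ∘ f) x := by simp only [Function.comp_apply, ← map_sub, hgv]; rfl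
      _ ≤ K * (y - x) := hgf.sub_le_mul_of_ae_hasDerivAt_le hxy hgderiv hgbound
  refine LipschitzOnWith.of_dist_le' fun x hx y hy ↦ ?_
  rw [dist_eq_norm, Real.dist_eq]
  rcases le_total x y with hxy | hyx
  · rw [norm_sub_rev, abs_sub_comm, abs_of_nonneg (sub_nonneg.2 hxy)]
    exact hle x hx y hy hxy
  · rw [abs_of_nonneg (sub_nonneg.2 hyx)]
    exact hle y hy x hx hyx

theorem abs_inner_hasDerivAt_le_of_inner_eq_zero {F : Type*} [NormedAddCommGroup F]
    [InnerProductSpace ℝ F] {u w : ℝ → F} {u' : F} {s : Set ℝ} {t A : ℝ} {L : NNReal}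
    (hs : s ∈ 𝓝 t) (hu : HasDerivAt u u' t) (horth : ∀ x ∈ s, inner ℝ (u x) (w x) = 0)
    (hbound : ∀ x ∈ s, ‖u x‖ ≤ A) (hw : LipschitzOnWith L w s) :
    |inner ℝ u' (w t)| ≤ A * L := by
  have ht : t ∈ s := mem_of_mem_nhds hs
  have hlim : Tendsto (fun x ↦ |inner ℝ (slope u t x) (w t)|) (𝓝[≠] t) (𝓝 |inner ℝ u' (w t)|) :=
    ((hasDerivAt_iff_tendsto_slope.1 hu).inner tendsto_const_nhds).abs
  refine le_of_tendsto hlim ?_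
  filter_upwards [mem_nhdsWithin_of_mem_nhds hs, self_mem_nhdsWithin] with x hx hxt
  have hxt' : 0 < |x - t| := abs_pos.2 (sub_ne_zero.2 hxt)
  -- the orthogonality at `x` and at `t` moves the increment from `u` to `w`
  have hswap : inner ℝ (u x - u t) (w t) = inner ℝ (u x) (w t - w x) := by
    rw [inner_sub_left, inner_sub_right, horth x hx, horth t ht]
  have hw_le : ‖w t - w x‖ ≤ L * |x - t| := by
    rw [← dist_eq_norm, ← Real.dist_eq, dist_comm x]
    exact hw.dist_le_mul t ht x hx
  rw [slope_def_module, real_inner_smul_left, hswap, abs_mul, abs_inv]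
  calc |x - t|⁻¹ * |inner ℝ (u x) (w t - w x)| ≤ |x - t|⁻¹ * (A * (L * |x - t|)) := by
        gcongr
        exact (abs_real_inner_le_norm _ _).trans
          (mul_le_mul (hbound x hx) hw_le (norm_nonneg _) ((norm_nonneg _).trans (hbound x hx)))
    _ = A * L := by field_simp

theorem norm_eq_abs_inner_div_of_eq_smul_inner {F : Type*} [NormedAddCommGroup F]
    [InnerProductSpace ℝ F] {v e : F} {r : ℝ} (he : ‖e‖ = r)
    (hv : v = (r ^ 2)⁻¹ • (inner ℝ v e • e)) : ‖v‖ = |inner ℝ v e| / r := by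
  conv_lhs => rw [hv]
  rw [norm_smul, norm_smul, he, Real.norm_eq_abs, Real.norm_eq_abs, abs_inv, abs_of_nonneg (sq_nonneg r)]
  rcases eq_or_ne r 0 with rfl | hr
  · simp
  · field_simp

theorem stmt13_general (n : ℕ) (r : ℝ) (hr : 0 < r) (a b : ℝ)
    (γ γ' γ'' : ℝ → EuclideanSpace ℝ (Fin n))
    (η : EuclideanSpace ℝ (Fin n) → EuclideanSpace ℝ (Fin n))
    (hγ : ∀ t ∈ Set.Icc a b, HasDerivAt γ (γ' t) t)
    (hγ'lip : ∃ C : NNReal, LipschitzOnWith C γ' (Set.Icc a b))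
    (hηlip : LipschitzWith 1 η)
    (hηnorm : ∀ t ∈ Set.Icc a b, ‖η (γ t)‖ = r)
    (horth : ∀ t ∈ Set.Icc a b, (inner ℝ (γ' t) (η (γ t)) : ℝ) = 0)
    (hspeed : ∀ t ∈ Set.Icc a b, ‖γ' t‖ = 1)
    (hderiv2 : ∀ᵐ t ∂(volume.restrict (Set.Icc a b)), HasDerivAt γ' (γ'' t) t)
    (hcol : ∀ᵐ t ∂(volume.restrict (Set.Icc a b)),
      γ'' t = (r^2)⁻¹ • ((inner ℝ (γ'' t) (η (γ t)) : ℝ) • η (γ t))) :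
    (∀ᵐ t ∂(volume.restrict (Set.Icc a b)), ‖γ'' t‖ ≤ 1 / r) ∧
    LipschitzOnWith (Real.toNNReal (1/r)) γ' (Set.Icc a b) := by
  obtain ⟨C, hC⟩ := hγ'lip
  have hγlip : LipschitzOnWith 1 γ (Icc a b) :=
    (convex_Icc a b).lipschitzOnWith_of_nnnorm_hasDerivWithin_le
      (fun t ht ↦ (hγ t ht).hasDerivWithinAt) fun t ht ↦ by simp [← NNReal.coe_le_coe, hspeed t ht]
  have hηγlip : LipschitzOnWith (1 * 1) (η ∘ γ) (Icc a b) := hηlip.comp_lipschitzOnWith hγlip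
  have hinterior : ∀ᵐ t ∂volume.restrict (Icc a b), t ∈ Ioo a b := by
    rw [← Measure.restrict_congr_set Ioo_ae_eq_Icc]
    exact ae_restrict_mem measurableSet_Ioo
  have hcurv : ∀ᵐ t ∂volume.restrict (Icc a b), ‖γ'' t‖ ≤ 1 / r := by
    filter_upwards [hderiv2, hcol, hinterior] with t hd hc ht
    have hinner : |inner ℝ (γ'' t) (η (γ t))| ≤ 1 := by
      simpa using abs_inner_hasDerivAt_le_of_inner_eq_zero (Icc_mem_nhds ht.1 ht.2) hd horth
        (fun x hx ↦ (hspeed x hx).le) hηγlip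
    rw [norm_eq_abs_inner_div_of_eq_smul_inner (hηnorm t (Ioo_subset_Icc_self ht)) hc]
    gcongr
  exact ⟨hcurv, hC.of_ae_hasDerivAt_norm_le hderiv2 hcurv⟩

theorem stmt13 (n : ℕ) (r : ℝ) (hr : 0 < r) (a b : ℝ) (hab : a < b)
    (γ γ' γ'' : ℝ → EuclideanSpace ℝ (Fin n))
    (η : EuclideanSpace ℝ (Fin n) → EuclideanSpace ℝ (Fin n))
    (hγ : ∀ t ∈ Set.Icc a b, HasDerivAt γ (γ' t) t)
    (hγ'lip : ∃ C : NNReal, LipschitzOnWith C γ' (Set.Icc a b))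
    (hηlip : LipschitzWith 1 η)
    (hηnorm : ∀ t ∈ Set.Icc a b, ‖η (γ t)‖ = r)
    (horth : ∀ t ∈ Set.Icc a b, (inner ℝ (γ' t) (η (γ t)) : ℝ) = 0)
    (hspeed : ∀ t ∈ Set.Icc a b, ‖γ' t‖ = 1)
    (hderiv2 : ∀ᵐ t ∂(volume.restrict (Set.Icc a b)), HasDerivAt γ' (γ'' t) t)
    (hcol : ∀ᵐ t ∂(volume.restrict (Set.Icc a b)),
      γ'' t = (r^2)⁻¹ • ((inner ℝ (γ'' t) (η (γ t)) : ℝ) • η (γ t))) :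
    (∀ᵐ t ∂(volume.restrict (Set.Icc a b)), ‖γ'' t‖ ≤ 1 / r) ∧
    LipschitzOnWith (Real.toNNReal (1/r)) γ' (Set.Icc a b) :=
  stmt13_general n r hr a b γ γ' γ'' η hγ hγ'lip hηlip hηnorm horth hspeed hderiv2 hcol
end

section
/- Let K ⊆ ℝⁿ be closed and N ⊆ ℝⁿ a set of points each having a unique nearest point on K; let π : N → K send each point to its nearest point. Then π is continuous on the interior of N. -/
/-!
Nearest points of points near `x₀` stay in a bounded, hence compact, region. Since `infDist` is
continuous, every cluster point of them is a nearest point of `x₀`, hence equal to `π x₀` by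
uniqueness; and a family in a compact set with a single cluster point converges to it.
-/

open Metric Filter Topology

theorem Filter.Tendsto.prodMk_mapClusterPt {ι X Y : Type*} [TopologicalSpace X]
    [TopologicalSpace Y] {l : Filter ι} {x : ι → X} {p : ι → Y} {x₀ : X} {a : Y}
    (hx : Tendsto x l (𝓝 x₀)) (hp : MapClusterPt a l p) :
    MapClusterPt (x₀, a) l (fun i ↦ (x i, p i)) := by
  rw [((𝓝 x₀).basis_sets.prod_nhds (𝓝 a).basis_sets).mapClusterPt_iff_frequently]
  rintro ⟨s, t⟩ ⟨hs, ht⟩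
  exact ((mapClusterPt_iff_frequently.1 hp t ht).and_eventually (hx hs)).mono
    fun _ h ↦ ⟨h.2, h.1⟩

namespace Metric

variable {α : Type*} [MetricSpace α] {K : Set α}

theorem isClosed_setOf_dist_eq_infDist (hK : IsClosed K) :
    IsClosed {z : α × α | z.2 ∈ K ∧ dist z.1 z.2 = infDist z.1 K} :=
  (hK.preimage continuous_snd).inter <|
    isClosed_eq (continuous_fst.dist continuous_snd) ((continuous_infDist_pt K).comp continuous_fst)

theorem dist_le_infDist_add_two_mul_of_dist_eq_infDist {y p : α} (hp : dist y p = infDist y K)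
    (x₀ : α) : dist p x₀ ≤ infDist x₀ K + 2 * dist y x₀ := by
  calc dist p x₀ ≤ dist y p + dist y x₀ := dist_triangle_left p x₀ y
    _ ≤ infDist x₀ K + dist y x₀ + dist y x₀ := by
      rw [hp]; gcongr; exact infDist_le_infDist_add_dist
    _ = infDist x₀ K + 2 * dist y x₀ := by ring

theorem tendsto_of_dist_eq_infDist [ProperSpace α] (hK : IsClosed K) {ι : Type*}
    {l : Filter ι} {x p : ι → α} {x₀ p₀ : α} (hx : Tendsto x l (𝓝 x₀))
    (hp : ∀ᶠ i in l, p i ∈ K ∧ dist (x i) (p i) = infDist (x i) K)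
    (huniq : ∀ q ∈ K, dist x₀ q = infDist x₀ K → q = p₀) :
    Tendsto p l (𝓝 p₀) := by
  have hbounded : ∀ᶠ i in l, p i ∈ closedBall x₀ (infDist x₀ K + 2) := by
    filter_upwards [hp, hx (closedBall_mem_nhds x₀ one_pos)] with i hi hxi
    have := dist_le_infDist_add_two_mul_of_dist_eq_infDist hi.2 x₀
    rw [Set.mem_preimage, mem_closedBall] at hxi
    rw [mem_closedBall]
    linarith
  refine (isCompact_closedBall x₀ _).tendsto_nhds_of_unique_mapClusterPt hbounded
    fun a _ ha ↦ ?_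
  have hnearest := (isClosed_setOf_dist_eq_infDist hK).mem_of_mapClusterPt
    (hx.prodMk_mapClusterPt ha) hp
  exact huniq a hnearest.1 hnearest.2

end Metric

theorem stmt15_general (n : ℕ) (K : Set (EuclideanSpace ℝ (Fin n))) (hK : IsClosed K)
    (N : Set (EuclideanSpace ℝ (Fin n)))
    (π : EuclideanSpace ℝ (Fin n) → EuclideanSpace ℝ (Fin n))
    (hπ : ∀ x ∈ N, π x ∈ K ∧ dist x (π x) = infDist x K)
    (huniq : ∀ x ∈ N, ∀ p ∈ K, dist x p = infDist x K → p = π x) :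
    ContinuousOn π (interior N) := by
  refine continuousOn_of_forall_continuousAt fun x₀ hx₀ ↦ ?_
  have hN : ∀ᶠ y in 𝓝 x₀, y ∈ N := mem_interior_iff_mem_nhds.mp hx₀
  exact tendsto_of_dist_eq_infDist hK tendsto_id (hN.mono hπ)
    (huniq x₀ (interior_subset hx₀))

theorem stmt15 (n : ℕ) (K : Set (EuclideanSpace ℝ (Fin n))) (hK : IsClosed K)
    (hKne : K.Nonempty)
    (N : Set (EuclideanSpace ℝ (Fin n)))
    (π : EuclideanSpace ℝ (Fin n) → EuclideanSpace ℝ (Fin n))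
    (hπ : ∀ x ∈ N, π x ∈ K ∧ dist x (π x) = infDist x K)
    (huniq : ∀ x ∈ N, ∀ p ∈ K, dist x p = infDist x K → p = π x) :
    ContinuousOn π (interior N) :=
  stmt15_general n K hK N π hπ huniq
end

section
/- Let f : N → ℝ be defined on an open set N ⊆ ℝⁿ by f(x) = ⟨x − π(x), η(π(x))⟩, where π : N → M ⊆ ℝⁿ is a Lipschitz map with π(x) = x for x ∈ M, and η : M → ℝⁿ is Lipschitz with ‖η(p)‖ = r. Assume x − π(x) is collinear with η(π(x)) for all x ∈ N, that η is a normal field on M (⟨η(p), q − p⟩ = o(‖q − p‖) as q → p in M), and that ⟨η(p), η(q) − η(p)⟩ = o(‖q − p‖). Then f is differentiable at every x ∈ N with Df_x(v) = ⟨v, η(π(x))⟩, and Df is Lipschitz, so f is of class C^{1+Lip}. -/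
open Asymptotics Filter Topology Set
open scoped InnerProductSpace

/-!
Put `p = π x` and `ν = η p`. For every `y`,
`f y - f x - ⟪y - x, ν⟫ = ⟪y - π y, η (π y) - ν⟫ - ⟪ν, π y - p⟫`.
The second term is `o(‖y - x‖)` since `η` is normal to `M` and `π` is Lipschitz. For the first,
`y - π y` is a multiple of `η (π y)`, and for two vectors `a, b` of equal norm
`⟪a, a - b⟫ = ‖a - b‖² / 2`; as `‖y - π y‖` stays bounded and `η ∘ π` is Lipschitz, that term is
`O(‖y - x‖²)`. The derivative `y ↦ ⟪·, η (π y)⟫` is Lipschitz as a composition of Lipschitz maps.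
-/

theorem LipschitzOnWith.isBigO_sub {E F : Type*} [SeminormedAddCommGroup E]
    [SeminormedAddCommGroup F] {f : E → F} {C : NNReal} {s : Set E} {x : E}
    (hf : LipschitzOnWith C f s) (hs : s ∈ 𝓝 x) :
    (fun y => f y - f x) =O[𝓝 x] fun y => y - x :=
  IsBigO.of_bound C <| eventually_of_mem hs fun y hy => by
    simpa only [dist_eq_norm] using hf.dist_le_mul y hy x (mem_of_mem_nhds hs)

section InnerProductSpace

variable {E : Type*} [NormedAddCommGroup E] [InnerProductSpace ℝ E]

theorem real_inner_sub_of_norm_eq {a b : E} (h : ‖a‖ = ‖b‖) :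
    ⟪a, a - b⟫_ℝ = ‖a - b‖ ^ 2 / 2 := by
  rw [norm_sub_sq_real, ← h, inner_sub_right, real_inner_self_eq_norm_sq]
  ring

theorem abs_real_inner_smul_sub_of_norm_eq {v a b : E} {t : ℝ} (hv : v = t • a)
    (h : ‖a‖ = ‖b‖) (ha : a ≠ 0) :
    |⟪v, a - b⟫_ℝ| = ‖v‖ * ‖a - b‖ ^ 2 / (2 * ‖a‖) := by
  have ha' : ‖a‖ ≠ 0 := norm_ne_zero_iff.mpr ha
  rw [hv, real_inner_smul_left, real_inner_sub_of_norm_eq h, norm_smul, Real.norm_eq_abs,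
    abs_mul, abs_of_nonneg (by positivity : (0 : ℝ) ≤ ‖a - b‖ ^ 2 / 2)]
  field_simp

variable {N M : Set E} {π η : E → E} {x : E} {Cπ : NNReal}

theorem isLittleO_inner_comp_sub_of_normal {ν : E} (hN : N ∈ 𝓝 x)
    (hπ : LipschitzOnWith Cπ π N) (hπM : MapsTo π N M)
    (hν : (fun q => ⟪ν, q - π x⟫_ℝ) =o[𝓝[M] π x] fun q => ‖q - π x‖) :
    (fun y => ⟪ν, π y - π x⟫_ℝ) =o[𝓝 x] fun y => y - x := by
  have hπx : Tendsto π (𝓝 x) (𝓝[M] π x) :=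
    tendsto_nhdsWithin_iff.mpr ⟨(hπ.continuousOn.continuousAt hN).tendsto,
      eventually_of_mem hN hπM⟩
  exact (hν.comp_tendsto hπx).trans_isBigO (hπ.isBigO_sub hN).norm_left

theorem isLittleO_inner_sub_of_collinear {r : ℝ} (hr : 0 < r) {C : NNReal} (hN : N ∈ 𝓝 x)
    (hπ : ContinuousAt π x) (hηπ : LipschitzOnWith C (η ∘ π) N) (hπM : MapsTo π N M)
    (hηr : ∀ p ∈ M, ‖η p‖ = r) (hcol : ∀ y ∈ N, ∃ t : ℝ, y - π y = t • η (π y)) :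
    (fun y => ⟪y - π y, η (π y) - η (π x)⟫_ℝ) =o[𝓝 x] fun y => y - x := by
  have hηx : ‖η (π x)‖ = r := hηr _ (hπM (mem_of_mem_nhds hN))
  have hbound : (fun y => ⟪y - π y, η (π y) - η (π x)⟫_ℝ) =O[𝓝 x]
      fun y => ‖y - π y‖ * ‖η (π y) - η (π x)‖ ^ 2 :=
    IsBigO.of_bound (2 * r)⁻¹ <| eventually_of_mem hN fun y hy => by
      obtain ⟨t, ht⟩ := hcol y hy
      have hηy : ‖η (π y)‖ = r := hηr _ (hπM hy)
      have hne : η (π y) ≠ 0 := norm_ne_zero_iff.mp (hηy ▸ hr.ne')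
      rw [Real.norm_eq_abs, abs_real_inner_smul_sub_of_norm_eq ht (hηy.trans hηx.symm) hne, hηy,
        Real.norm_of_nonneg (by positivity)]
      exact (div_eq_inv_mul _ _).le
  have hbdd : (fun y => ‖y - π y‖) =O[𝓝 x] fun _ => (1 : ℝ) :=
    (continuousAt_id.sub hπ).norm.tendsto.isBigO_one ℝ
  have hsq : (fun y => ‖η (π y) - η (π x)‖ ^ 2) =O[𝓝 x] fun y => ‖y - x‖ ^ 2 :=
    (hηπ.isBigO_sub hN).norm_norm.pow 2
  refine hbound.trans_isLittleO ((hbdd.mul hsq).trans_isLittleO ?_)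
  simpa only [one_mul] using isLittleO_pow_sub_sub x one_lt_two

theorem hasFDerivAt_inner_sub_proj {r : ℝ} (hr : 0 < r) {Cη : NNReal} (hN : N ∈ 𝓝 x)
    (hπ : LipschitzOnWith Cπ π N) (hπM : MapsTo π N M) (hη : LipschitzOnWith Cη η M)
    (hηr : ∀ p ∈ M, ‖η p‖ = r) (hcol : ∀ y ∈ N, ∃ t : ℝ, y - π y = t • η (π y))
    (hnormal : (fun q => ⟪η (π x), q - π x⟫_ℝ) =o[𝓝[M] π x] fun q => ‖q - π x‖) :
    HasFDerivAt (fun y => ⟪y - π y, η (π y)⟫_ℝ) (innerSL ℝ (η (π x))) x := by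
  have hremainder : ∀ y, ⟪y - π y, η (π y) - η (π x)⟫_ℝ - ⟪η (π x), π y - π x⟫_ℝ =
      ⟪y - π y, η (π y)⟫_ℝ - ⟪x - π x, η (π x)⟫_ℝ - innerSL ℝ (η (π x)) (y - x) := fun y => by
    simp only [innerSL_apply_apply, inner_sub_left, inner_sub_right, real_inner_comm (η (π x))]
    ring
  refine HasFDerivAt.of_isLittleO (IsLittleO.congr_left ?_ hremainder)
  exact (isLittleO_inner_sub_of_collinear hr hN (hπ.continuousOn.continuousAt hN)
    (hη.comp hπ hπM) hπM hηr hcol).sub (isLittleO_inner_comp_sub_of_normal hN hπ hπM hnormal)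

end InnerProductSpace

theorem stmt18_general (n : ℕ) (r : ℝ) (hr : 0 < r)
    (N M : Set (EuclideanSpace ℝ (Fin n))) (hN : IsOpen N)
    (π η : EuclideanSpace ℝ (Fin n) → EuclideanSpace ℝ (Fin n))
    (hπlip : ∃ C : NNReal, LipschitzOnWith C π N)
    (hπmaps : Set.MapsTo π N M)
    (hηlip : ∃ C : NNReal, LipschitzOnWith C η M)
    (hηnorm : ∀ p ∈ M, ‖η p‖ = r)
    (hcol : ∀ x ∈ N, ∃ t : ℝ, x - π x = t • η (π x))
    (hnormal : ∀ p ∈ M,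
      (fun q => (inner ℝ (η p) (q - p) : ℝ)) =o[nhdsWithin p M] fun q => ‖q - p‖)
    (f : EuclideanSpace ℝ (Fin n) → ℝ)
    (hf : f = fun x => (inner ℝ (x - π x) (η (π x)) : ℝ)) :
    (∀ x ∈ N, HasFDerivAt f ((innerSL ℝ) (η (π x))) x) ∧
    ∃ C : NNReal, LipschitzOnWith C
      (fun x => ((innerSL ℝ) (η (π x)) : EuclideanSpace ℝ (Fin n) →L[ℝ] ℝ)) N := by
  obtain ⟨Cπ, hπ⟩ := hπlip
  obtain ⟨Cη, hη⟩ := hηlip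
  subst hf
  exact ⟨fun x hx => hasFDerivAt_inner_sub_proj hr (hN.mem_nhds hx) hπ hπmaps hη hηnorm hcol
      (hnormal _ (hπmaps hx)),
    _, (innerSL ℝ).lipschitz.comp_lipschitzOnWith (hη.comp hπ hπmaps)⟩

theorem stmt18 (n : ℕ) (r : ℝ) (hr : 0 < r)
    (N M : Set (EuclideanSpace ℝ (Fin n))) (hN : IsOpen N)
    (π η : EuclideanSpace ℝ (Fin n) → EuclideanSpace ℝ (Fin n))
    (hπlip : ∃ C : NNReal, LipschitzOnWith C π N)
    (hπid : ∀ x ∈ M, π x = x)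
    (hπmaps : Set.MapsTo π N M)
    (hηlip : ∃ C : NNReal, LipschitzOnWith C η M)
    (hηnorm : ∀ p ∈ M, ‖η p‖ = r)
    (hcol : ∀ x ∈ N, ∃ t : ℝ, x - π x = t • η (π x))
    (hnormal : ∀ p ∈ M,
      (fun q => (inner ℝ (η p) (q - p) : ℝ)) =o[nhdsWithin p M] fun q => ‖q - p‖)
    (hηnormal : ∀ p ∈ M,
      (fun q => (inner ℝ (η p) (η q - η p) : ℝ)) =o[nhdsWithin p M] fun q => ‖q - p‖)
    (f : EuclideanSpace ℝ (Fin n) → ℝ)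
    (hf : f = fun x => (inner ℝ (x - π x) (η (π x)) : ℝ)) :
    (∀ x ∈ N, HasFDerivAt f ((innerSL ℝ) (η (π x))) x) ∧
    ∃ C : NNReal, LipschitzOnWith C
      (fun x => ((innerSL ℝ) (η (π x)) : EuclideanSpace ℝ (Fin n) →L[ℝ] ℝ)) N :=
  stmt18_general n r hr N M hN π η hπlip hπmaps hηlip hηnorm hcol hnormal f hf
end
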